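/- arXiv:1912.03012 — 8 statements merged into one kernel-verified Lean document; each statement's English description precedes it below -/
import Mathlib

section
/- Let r, r' be natural numbers. The commutative ring R = ℤ[h,ξ]/(h^{r+1}, ξ·(ξ−h)^{r'+1}) is a free ℤ-module of rank (r+1)(r'+2), and the images of the (r+1)(r'+2) elements h^i·(ξ−h)^j for 0 ≤ i ≤ r and 0 ≤ j ≤ r'+1 form a ℤ-basis of R. -/
/-!
Put `η = ξ - h`. Then `ξ·(ξ-h)^(r'+1) = η^(r'+1)·(η + h)`, which is monic of degree `r'+2` in `η`
over `A = ℤ[h]/(h^(r+1))`. Hence `R ≅ A[η]/(η^(r'+1)·(η + h))`, a tower of two adjunctions of a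
root of a monic polynomial, and the product of the two power bases `h^i` and `η^j` is a `ℤ`-basis.
-/

open MvPolynomial

/-- The ideal `(h^(r+1), ξ·(ξ−h)^(r'+1))` in `ℤ[h,ξ]`, with `h = X 0`, `ξ = X 1`. -/
noncomputable def flipIdeal (r r' : ℕ) : Ideal (MvPolynomial (Fin 2) ℤ) :=
  Ideal.span {(X 0 : MvPolynomial (Fin 2) ℤ) ^ (r + 1),
              (X 1 : MvPolynomial (Fin 2) ℤ) * ((X 1 : MvPolynomial (Fin 2) ℤ) - X 0) ^ (r' + 1)}

/-- The ring `R = ℤ[h,ξ]/(h^(r+1), ξ·(ξ−h)^(r'+1))`. -/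
abbrev FlipRing (r r' : ℕ) : Type :=
  MvPolynomial (Fin 2) ℤ ⧸ flipIdeal r r'

/-- The image of `h` in `R`. -/
noncomputable def hcl (r r' : ℕ) : FlipRing r r' :=
  Ideal.Quotient.mk (flipIdeal r r') (X 0)

/-- The image of `ξ` in `R`. -/
noncomputable def xcl (r r' : ℕ) : FlipRing r r' :=
  Ideal.Quotient.mk (flipIdeal r r') (X 1)

namespace AdjoinRoot

variable {R : Type*} [CommRing R] {f : Polynomial R} {g : Polynomial (AdjoinRoot f)}

noncomputable def towerBasis (hf : f.Monic) (hg : g.Monic) :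
    Module.Basis (Fin f.natDegree × Fin g.natDegree) R (AdjoinRoot g) :=
  (powerBasis' hf).basis.smulTower (powerBasis' hg).basis

theorem towerBasis_apply (hf : f.Monic) (hg : g.Monic) (i : Fin f.natDegree)
    (j : Fin g.natDegree) :
    towerBasis hf hg (i, j) = of g (root f ^ (i : ℕ)) * root g ^ (j : ℕ) := by
  refine (Module.Basis.smulTower_apply _ _ (i, j)).trans ?_
  rw [Algebra.smul_def, algebraMap_eq, ← powerBasis'_gen hf, ← powerBasis'_gen hg]
  exact congr_arg₂ (· * ·) (congr_arg _ ((powerBasis' hf).basis_eq_pow i))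
    ((powerBasis' hg).basis_eq_pow j)

end AdjoinRoot

namespace FlipRing

open AdjoinRoot

variable (r r' : ℕ)

abbrev Base : Type := AdjoinRoot (Polynomial.X ^ (r + 1) : Polynomial ℤ)

instance : Nontrivial (Base r) :=
  AdjoinRoot.nontrivial _ (by rw [Polynomial.degree_X_pow]; exact_mod_cast r.succ_ne_zero)

noncomputable def fiberPoly : Polynomial (Base r) :=
  Polynomial.X ^ (r' + 1) * (Polynomial.X + Polynomial.C (root _))

abbrev Tower : Type := AdjoinRoot (fiberPoly r r')

theorem fiberPoly_monic : (fiberPoly r r').Monic :=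
  (Polynomial.monic_X_pow _).mul (Polynomial.monic_X_add_C _)

theorem fiberPoly_natDegree : (fiberPoly r r').natDegree = r' + 2 := by
  rw [fiberPoly, (Polynomial.monic_X_pow _).natDegree_mul (Polynomial.monic_X_add_C _),
    Polynomial.natDegree_X_pow, Polynomial.natDegree_X_add_C]

theorem hcl_pow_succ : hcl r r' ^ (r + 1) = 0 := by
  rw [hcl, ← map_pow, Ideal.Quotient.eq_zero_iff_mem]
  exact Ideal.subset_span (Set.mem_insert _ _)

theorem xcl_mul_sub_hcl_pow_succ : xcl r r' * (xcl r r' - hcl r r') ^ (r' + 1) = 0 := by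
  rw [xcl, hcl, ← map_sub, ← map_pow, ← map_mul, Ideal.Quotient.eq_zero_iff_mem]
  exact Ideal.subset_span (Set.mem_insert_of_mem _ rfl)

noncomputable def toFlipRing : Tower r r' →+* FlipRing r r' :=
  lift (lift (Int.castRingHom _) (hcl r r') (by simp [hcl_pow_succ]))
    (xcl r r' - hcl r r')
    (by simp [fiberPoly, lift_root, ← xcl_mul_sub_hcl_pow_succ r r', mul_comm])

theorem toFlipRing_of_root : toFlipRing r r' (of _ (root _)) = hcl r r' := by
  rw [toFlipRing, lift_of, lift_root]

theorem toFlipRing_root : toFlipRing r r' (root _) = xcl r r' - hcl r r' :=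
  lift_root _

theorem of_root_pow_succ : of (fiberPoly r r') (root _) ^ (r + 1) = 0 := by
  rw [← map_pow, ← mk_X, ← map_pow, mk_self, map_zero]

theorem root_pow_succ_mul : root (fiberPoly r r') ^ (r' + 1) * (root _ + of _ (root _)) = 0 := by
  have h := eval₂_root (fiberPoly r r')
  rwa [fiberPoly, Polynomial.eval₂_mul, Polynomial.eval₂_X_pow, Polynomial.eval₂_add,
    Polynomial.eval₂_X, Polynomial.eval₂_C] at h

noncomputable def evalTower : MvPolynomial (Fin 2) ℤ →+* Tower r r' :=
  eval₂Hom (Int.castRingHom _) ![of _ (root _), root _ + of _ (root _)]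

theorem flipIdeal_le_ker_evalTower : flipIdeal r r' ≤ RingHom.ker (evalTower r r') := by
  rw [flipIdeal, Ideal.span_le, Set.insert_subset_iff, Set.singleton_subset_iff]
  constructor
  · simp [evalTower, of_root_pow_succ]
  · simp [evalTower, ← root_pow_succ_mul r r', mul_comm]

noncomputable def ofFlipRing : FlipRing r r' →+* Tower r r' :=
  Ideal.Quotient.lift _ (evalTower r r') fun _ ha => flipIdeal_le_ker_evalTower r r' ha

theorem ofFlipRing_hcl : ofFlipRing r r' (hcl r r') = of _ (root _) := by
  simp [ofFlipRing, hcl, evalTower]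

theorem ofFlipRing_xcl : ofFlipRing r r' (xcl r r') = root _ + of _ (root _) := by
  simp [ofFlipRing, xcl, evalTower]

theorem toFlipRing_comp_ofFlipRing :
    (toFlipRing r r').comp (ofFlipRing r r') = RingHom.id _ := by
  refine Ideal.Quotient.ringHom_ext (MvPolynomial.ringHom_ext' (Subsingleton.elim _ _) fun i => ?_)
  fin_cases i
  · change toFlipRing r r' (ofFlipRing r r' (hcl r r')) = hcl r r'
    rw [ofFlipRing_hcl, toFlipRing_of_root]
  · change toFlipRing r r' (ofFlipRing r r' (xcl r r')) = xcl r r'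
    rw [ofFlipRing_xcl, map_add, toFlipRing_root, toFlipRing_of_root, sub_add_cancel]

theorem ofFlipRing_comp_toFlipRing :
    (ofFlipRing r r').comp (toFlipRing r r') = RingHom.id _ := by
  refine ringHom_ext (ringHom_ext (Subsingleton.elim _ _) ?_) ?_
  · simp only [RingHom.comp_apply, toFlipRing_of_root, ofFlipRing_hcl, RingHom.id_apply]
  · simp only [RingHom.comp_apply, toFlipRing_root, map_sub, ofFlipRing_xcl, ofFlipRing_hcl,
      add_sub_cancel_right, RingHom.id_apply]

noncomputable def equivTower : FlipRing r r' ≃+* Tower r r' :=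
  .ofRingHom (ofFlipRing r r') (toFlipRing r r') (ofFlipRing_comp_toFlipRing r r')
    (toFlipRing_comp_ofFlipRing r r')

noncomputable def canonicalBasis :
    Module.Basis (Fin (r + 1) × Fin (r' + 2)) ℤ (FlipRing r r') :=
  ((towerBasis (Polynomial.monic_X_pow (r + 1)) (fiberPoly_monic r r')).map
      (equivTower r r').symm.toAddEquiv.toIntLinearEquiv).reindex
    ((finCongr (Polynomial.natDegree_X_pow _)).prodCongr (finCongr (fiberPoly_natDegree r r')))

theorem canonicalBasis_apply (i : Fin (r + 1)) (j : Fin (r' + 2)) :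
    canonicalBasis r r' (i, j) = hcl r r' ^ (i : ℕ) * (xcl r r' - hcl r r') ^ (j : ℕ) := by
  rw [canonicalBasis, Module.Basis.reindex_apply, Module.Basis.map_apply]
  change toFlipRing r r' (towerBasis _ (fiberPoly_monic r r') _) = _
  simp [towerBasis_apply, toFlipRing_of_root, toFlipRing_root]

end FlipRing

/-- `R = ℤ[h,ξ]/(h^(r+1), ξ·(ξ−h)^(r'+1))` is a free `ℤ`-module of rank
`(r+1)(r'+2)`, with `ℤ`-basis the images of `h^i·(ξ−h)^j` for `0 ≤ i ≤ r`, `0 ≤ j ≤ r'+1`. -/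
theorem flipRing_free_with_canonical_basis (r r' : ℕ) :
    Module.Free ℤ (FlipRing r r') ∧
    Module.finrank ℤ (FlipRing r r') = (r + 1) * (r' + 2) ∧
    ∃ b : Module.Basis (Fin (r + 1) × Fin (r' + 2)) ℤ (FlipRing r r'),
      ∀ (i : Fin (r + 1)) (j : Fin (r' + 2)),
        b (i, j) = hcl r r' ^ (i : ℕ) * (xcl r r' - hcl r r') ^ (j : ℕ) :=
  ⟨.of_basis (FlipRing.canonicalBasis r r'),
    by rw [Module.finrank_eq_card_basis (FlipRing.canonicalBasis r r'), Fintype.card_prod]; simp,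
    FlipRing.canonicalBasis r r', FlipRing.canonicalBasis_apply r r'⟩
end

section
/- Let r, r' be natural numbers and R = ℤ[h,ξ]/(h^{r+1}, ξ·(ξ−h)^{r'+1}). Then for all integers i, j with 0 ≤ i ≤ r' and j ≥ r'+1, the following identity holds in R: ∑_{m=0}^{r'−i} (−1)^m · binomial(j−i, m) · ξ^{j−i−m} · (ξ−h)^{i+m} = h^{j−i}·(ξ−h)^i + (−1)^{r'−i} · h^{j−r'−1}·(ξ−h)^{r'+1}. -/
open MvPolynomial

section TruncatedBinomial

variable {A : Type*} [CommRing A] {x e : A} {N : ℕ}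

theorem pow_mul_pow_eq_zero_of_mul_pow_eq_zero (hxe : x * e ^ N = 0) {a b : ℕ}
    (ha : 1 ≤ a) (hb : N ≤ b) : x ^ a * e ^ b = 0 := by
  obtain ⟨a, rfl⟩ := Nat.exists_eq_add_of_le' ha
  obtain ⟨b, rfl⟩ := Nat.exists_eq_add_of_le hb
  calc x ^ (a + 1) * e ^ (N + b) = (x * e ^ N) * (x ^ a * e ^ b) := by ring
    _ = 0 := by rw [hxe, zero_mul]

/-- Multiplication by `e` agrees with multiplication by `e - x` on multiples of `e ^ N`. -/
theorem pow_add_eq_sub_pow_mul_of_mul_pow_eq_zero (hxe : x * e ^ N = 0) (t : ℕ) :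
    e ^ (N + t) = (e - x) ^ t * e ^ N := by
  induction t with
  | zero => simp
  | succ t ih =>
    calc e ^ (N + (t + 1)) = (e - x) * e ^ (N + t) + x * e ^ N * e ^ t := by ring
      _ = (e - x) ^ (t + 1) * e ^ N := by rw [ih, hxe]; ring

/-- Of the binomial expansion of `(x - e) ^ n * e ^ i` only the first `d + 1` terms and the last
one, `(-1) ^ n * e ^ (i + n)`, survive once `x * e ^ (i + d + 1) = 0`. -/
theorem sum_range_neg_one_pow_mul_choose_of_mul_pow_eq_zero {i d n : ℕ}
    (hxe : x * e ^ (i + d + 1) = 0) (hdn : d < n) :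
    ∑ m ∈ Finset.range (d + 1), (-1 : A) ^ m * (n.choose m : A) * (x ^ (n - m) * e ^ (i + m)) =
      (x - e) ^ n * e ^ i + (-1 : A) ^ d * ((x - e) ^ (n - d - 1) * e ^ (i + d + 1)) := by
  obtain ⟨t, rfl⟩ : ∃ t, n = d + 1 + t := ⟨n - (d + 1), by omega⟩
  set f : ℕ → A := fun m ↦
    (-1 : A) ^ m * ((d + 1 + t).choose m : A) * (x ^ (d + 1 + t - m) * e ^ (i + m))
  have binomial : (x - e) ^ (d + 1 + t) * e ^ i = ∑ m ∈ Finset.range (d + 1 + t + 1), f m := by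
    rw [sub_eq_neg_add, add_pow, Finset.sum_mul]
    refine Finset.sum_congr rfl fun m _ ↦ ?_
    rw [neg_pow]
    simp only [f, pow_add]
    ring
  have middle_vanish : ∑ m ∈ Finset.Ico (d + 1) (d + 1 + t), f m = 0 := by
    refine Finset.sum_eq_zero fun m hm ↦ ?_
    rw [Finset.mem_Ico] at hm
    simp only [f, pow_mul_pow_eq_zero_of_mul_pow_eq_zero hxe (a := d + 1 + t - m) (by omega)
      (by omega : i + d + 1 ≤ i + m), mul_zero]
  have last : f (d + 1 + t) = -((-1 : A) ^ d * ((x - e) ^ t * e ^ (i + d + 1))) := by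
    have sign : (-1 : A) ^ (d + 1 + t) * (-1) ^ t = -(-1) ^ d := by
      rw [pow_add, mul_assoc, ← pow_add, ← two_mul, pow_mul, neg_one_sq, one_pow]
      ring
    simp only [f, Nat.choose_self, Nat.sub_self, pow_zero, Nat.cast_one, mul_one, one_mul]
    rw [show i + (d + 1 + t) = i + d + 1 + t by omega,
      pow_add_eq_sub_pow_mul_of_mul_pow_eq_zero hxe, ← neg_sub x e, neg_pow (x - e), ← mul_assoc, ← mul_assoc, sign]
    ring
  calc ∑ m ∈ Finset.range (d + 1), f m
      = ∑ m ∈ Finset.range (d + 1 + t + 1), f m - ∑ m ∈ Finset.Ico (d + 1) (d + 1 + t), f m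
          - f (d + 1 + t) := by
        rw [Finset.sum_range_succ f (d + 1 + t),
          ← Finset.sum_range_add_sum_Ico f (by omega : d + 1 ≤ d + 1 + t)]
        ring
    _ = _ := by rw [← binomial, middle_vanish, last, show d + 1 + t - d - 1 = t by omega]; ring

end TruncatedBinomial

theorem xcl_mul_sub_hcl_pow_eq_zero (r r' : ℕ) :
    xcl r r' * (xcl r r' - hcl r r') ^ (r' + 1) = 0 := by
  rw [xcl, hcl, ← map_sub, ← map_pow, ← map_mul, Ideal.Quotient.eq_zero_iff_mem]
  exact Ideal.subset_span (by simp)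

/-- in `R = ℤ[h,ξ]/(h^(r+1), ξ·(ξ−h)^(r'+1))`, for `0 ≤ i ≤ r'` and `j ≥ r'+1`,
`∑_{m=0}^{r'−i} (−1)^m·C(j−i,m)·ξ^(j−i−m)·(ξ−h)^(i+m)
   = h^(j−i)·(ξ−h)^i + (−1)^(r'−i)·h^(j−r'−1)·(ξ−h)^(r'+1)`. -/
theorem flipRing_Psi_image_formula (r r' : ℕ) (i j : ℕ) (hi : i ≤ r') (hj : r' + 1 ≤ j) :
    ∑ m ∈ Finset.range (r' - i + 1),
        (-1 : FlipRing r r') ^ m * ((j - i).choose m : FlipRing r r') *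
          (xcl r r' ^ (j - i - m) * (xcl r r' - hcl r r') ^ (i + m)) =
      hcl r r' ^ (j - i) * (xcl r r' - hcl r r') ^ i +
        (-1 : FlipRing r r') ^ (r' - i) *
          (hcl r r' ^ (j - r' - 1) * (xcl r r' - hcl r r') ^ (r' + 1)) := by
  have hN : i + (r' - i) + 1 = r' + 1 := by omega
  have key := sum_range_neg_one_pow_mul_choose_of_mul_pow_eq_zero
    (hN ▸ xcl_mul_sub_hcl_pow_eq_zero r r') (show r' - i < j - i by omega)
  rwa [sub_sub_cancel, hN, show j - i - (r' - i) - 1 = j - r' - 1 by omega] at key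
end

section
/- Let r > r' ≥ 0 be integers, d := r − r', and R = ℤ[h,ξ]/(h^{r+1}, ξ·(ξ−h)^{r'+1}). Then the following collection of elements of R is a ℤ-basis of R: (i) h^a·(ξ−h)^b for 0 ≤ a, 0 ≤ b ≤ r', a+b ≤ r'; (ii) h^a·(ξ−h)^b + (−1)^{r'−b}·h^{a+b−r'−1}·(ξ−h)^{r'+1} for 0 ≤ a ≤ r+1, 0 ≤ b ≤ r', a+b ≥ r'+1; (iii) h^m·(ξ−h)^{r'+1} for 0 ≤ m ≤ d−1. -/
open MvPolynomial

noncomputable section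
namespace FlipBasis
open Polynomial
variable (r r' : ℕ)

abbrev A := AdjoinRoot ((Polynomial.X : ℤ[X]) ^ (r+1))
instance : Nontrivial (A r) :=
  AdjoinRoot.nontrivial _ (by rw [Polynomial.degree_X_pow]; exact_mod_cast (by omega : r + 1 ≠ 0))
def aa : A r := AdjoinRoot.root _
def g : (A r)[X] := (Polynomial.X + Polynomial.C (aa r)) * Polynomial.X ^ (r'+1)
lemma g_monic : (g r r').Monic := (monic_X_add_C _).mul (monic_X_pow _)
lemma g_natDegree : (g r r').natDegree = r' + 2 := by
  rw [g, (monic_X_add_C _).natDegree_mul (monic_X_pow _), natDegree_X_add_C, natDegree_X_pow]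
  omega
def pbA : PowerBasis ℤ (A r) := AdjoinRoot.powerBasis' (monic_X_pow _)
def pbG : PowerBasis (A r) (AdjoinRoot (g r r')) := AdjoinRoot.powerBasis' (g_monic r r')
def bM : Module.Basis (Fin (r+1) × Fin (r'+2)) ℤ (AdjoinRoot (g r r')) :=
  ((pbA r).basis.reindex (finCongr (by simp [pbA]))).smulTower
    ((pbG r r').basis.reindex (finCongr (by simp [pbG, g_natDegree])))
lemma bM_apply (i : Fin (r+1)) (j : Fin (r'+2)) :
    bM r r' (i, j) = AdjoinRoot.of _ (aa r ^ (i:ℕ)) * AdjoinRoot.root (g r r') ^ (j:ℕ) := by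
  rw [bM, Module.Basis.smulTower_apply, Module.Basis.reindex_apply, Module.Basis.reindex_apply,
    PowerBasis.basis_eq_pow, PowerBasis.basis_eq_pow, Algebra.smul_def]
  simp [pbA, pbG, aa]
  rfl

lemma hcl_pow : hcl r r' ^ (r+1) = 0 := by
  rw [hcl, ← map_pow, Ideal.Quotient.eq_zero_iff_mem]
  exact Ideal.subset_span (by simp)

lemma xcl_rel : xcl r r' * (xcl r r' - hcl r r') ^ (r'+1) = 0 := by
  rw [xcl, hcl, ← map_sub, ← map_pow, ← map_mul, Ideal.Quotient.eq_zero_iff_mem]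
  exact Ideal.subset_span (by simp)

lemma aa_pow : aa r ^ (r + 1) = 0 := by
  rw [aa, ← AdjoinRoot.mk_X, ← map_pow, AdjoinRoot.mk_self]

/-- map A → R -/
def iAR : A r →+* FlipRing r r' :=
  AdjoinRoot.lift (Int.castRingHom _) (hcl r r') (by
    simp [Polynomial.eval₂_pow, hcl_pow])

lemma iAR_root : iAR r r' (aa r) = hcl r r' := AdjoinRoot.lift_root _

/-- map AdjoinRoot g → R -/
def Gmap : AdjoinRoot (g r r') →+* FlipRing r r' :=
  AdjoinRoot.lift (iAR r r') (xcl r r' - hcl r r') (by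
    simp only [g, Polynomial.eval₂_mul, Polynomial.eval₂_pow, Polynomial.eval₂_add,
      Polynomial.eval₂_X, Polynomial.eval₂_C, iAR_root]
    rw [sub_add_cancel, xcl_rel])

/-- map R → AdjoinRoot g -/
def Fmap : FlipRing r r' →+* AdjoinRoot (g r r') :=
  Ideal.Quotient.lift _ (MvPolynomial.eval₂Hom (Int.castRingHom _)
    (![AdjoinRoot.of _ (aa r), AdjoinRoot.root (g r r') + AdjoinRoot.of _ (aa r)])) (by
    intro p hp
    rw [← RingHom.mem_ker]
    refine Ideal.span_le.2 ?_ hp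
    rintro q hq
    simp only [Set.mem_insert_iff, Set.mem_singleton_iff] at hq
    rcases hq with rfl | rfl <;> simp only [SetLike.mem_coe, RingHom.mem_ker, map_pow, map_mul,
      map_sub, MvPolynomial.eval₂Hom_X']
    · show (AdjoinRoot.of _ (aa r)) ^ (r+1) = 0
      rw [← map_pow, aa_pow, map_zero]
    · show (AdjoinRoot.root (g r r') + AdjoinRoot.of _ (aa r)) *
        ((AdjoinRoot.root (g r r') + AdjoinRoot.of _ (aa r)) - AdjoinRoot.of _ (aa r)) ^ (r'+1) = 0
      have h0 : Polynomial.eval₂ (AdjoinRoot.of (g r r')) (AdjoinRoot.root (g r r'))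
          ((Polynomial.X + Polynomial.C (aa r)) * Polynomial.X ^ (r' + 1)) = 0 :=
        AdjoinRoot.eval₂_root (g r r')
      simp only [Polynomial.eval₂_mul, Polynomial.eval₂_pow, Polynomial.eval₂_add,
        Polynomial.eval₂_X, Polynomial.eval₂_C] at h0
      rw [add_sub_cancel_right]
      exact h0)


lemma Fmap_hcl : Fmap r r' (hcl r r') = AdjoinRoot.of _ (aa r) := by
  rw [hcl, Fmap, Ideal.Quotient.lift_mk]
  simp

lemma Fmap_xcl : Fmap r r' (xcl r r') = AdjoinRoot.root (g r r') + AdjoinRoot.of _ (aa r) := by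
  rw [xcl, Fmap, Ideal.Quotient.lift_mk]
  simp

lemma Gmap_root : Gmap r r' (AdjoinRoot.root (g r r')) = xcl r r' - hcl r r' :=
  AdjoinRoot.lift_root _

lemma Gmap_of (x : A r) : Gmap r r' (AdjoinRoot.of _ x) = iAR r r' x :=
  AdjoinRoot.lift_of _

lemma GF : (Gmap r r').comp (Fmap r r') = RingHom.id _ := by
  refine Ideal.Quotient.ringHom_ext (MvPolynomial.ringHom_ext (fun n => ?_) (fun i => ?_))
  · simp
  · fin_cases i <;>
      simp only [RingHom.comp_apply, Ideal.Quotient.mk_algebraMap]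
    · show Gmap r r' (Fmap r r' (hcl r r')) = hcl r r'
      rw [Fmap_hcl, Gmap_of, iAR_root]
    · show Gmap r r' (Fmap r r' (xcl r r')) = xcl r r'
      rw [Fmap_xcl, map_add, Gmap_root, Gmap_of, iAR_root, sub_add_cancel]

lemma FG : (Fmap r r').comp (Gmap r r') = RingHom.id _ := by
  have hroot : Fmap r r' (Gmap r r' (AdjoinRoot.root (g r r'))) = AdjoinRoot.root (g r r') := by
    rw [Gmap_root, map_sub, Fmap_xcl, Fmap_hcl, add_sub_cancel_right]
  have haa : Fmap r r' (Gmap r r' (AdjoinRoot.of _ (aa r))) = AdjoinRoot.of _ (aa r) := by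
    rw [Gmap_of, iAR_root, Fmap_hcl]
  refine Ideal.Quotient.ringHom_ext (Polynomial.ringHom_ext' ?_ ?_)
  · refine Ideal.Quotient.ringHom_ext (Polynomial.ringHom_ext' (RingHom.ext_int _ _) ?_)
    exact haa
  · exact hroot

def ringE : FlipRing r r' ≃+* AdjoinRoot (g r r') :=
  RingEquiv.ofRingHom (Fmap r r') (Gmap r r') (FG r r') (GF r r')

def bR : Module.Basis (Fin (r+1) × Fin (r'+2)) ℤ (FlipRing r r') :=
  (bM r r').map (ringE r r').symm.toAddEquiv.toIntLinearEquiv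

lemma bR_apply (i : Fin (r+1)) (j : Fin (r'+2)) :
    bR r r' (i, j) = hcl r r' ^ (i:ℕ) * (xcl r r' - hcl r r') ^ (j:ℕ) := by
  rw [bR, Module.Basis.map_apply, bM_apply]
  have : (ringE r r').symm.toAddEquiv.toIntLinearEquiv (modM := inferInstance) (modM₂ := inferInstance)
      ((AdjoinRoot.of (g r r')) (aa r ^ (i:ℕ)) * AdjoinRoot.root (g r r') ^ (j:ℕ))
      = Gmap r r' ((AdjoinRoot.of (g r r')) (aa r ^ (i:ℕ)) * AdjoinRoot.root (g r r') ^ (j:ℕ)) := rfl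
  have h2 : ∀ x, (ringE r r').symm x = Gmap r r' x := fun _ => rfl
  simp [this, h2, map_mul, map_pow, Gmap_root, Gmap_of, iAR_root]

abbrev Idx :=
  ({p : ℕ × ℕ // p.2 ≤ r' ∧ p.1 + p.2 ≤ r'} ⊕
    {p : ℕ × ℕ // p.1 ≤ r + 1 ∧ p.2 ≤ r' ∧ r' + 1 ≤ p.1 + p.2}) ⊕
    Fin (r - r')

def v : Idx r r' → FlipRing r r'
  | .inl (.inl p) => hcl r r' ^ p.1.1 * (xcl r r' - hcl r r') ^ p.1.2
  | .inl (.inr p) => hcl r r' ^ p.1.1 * (xcl r r' - hcl r r') ^ p.1.2 +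
      (-1 : FlipRing r r') ^ (r' - p.1.2) *
        (hcl r r' ^ (p.1.1 + p.1.2 - r' - 1) * (xcl r r' - hcl r r') ^ (r' + 1))
  | .inr m => hcl r r' ^ (m : ℕ) * (xcl r r' - hcl r r') ^ (r' + 1)

variable (hrr' : r' < r)

def eIdx : Fin (r+1) × Fin (r'+2) ≃ Idx r r' where
  toFun := fun x =>
    if hj : (x.2 : ℕ) ≤ r' then
      (if hij : (x.1 : ℕ) + (x.2 : ℕ) ≤ r' then .inl (.inl ⟨((x.1:ℕ), (x.2:ℕ)), hj, hij⟩)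
       else .inl (.inr ⟨((x.1:ℕ), (x.2:ℕ)), by have := x.1.isLt; omega, hj, by omega⟩))
    else
      (if him : (x.1 : ℕ) < r - r' then .inr ⟨(x.1:ℕ), him⟩
       else .inl (.inr ⟨(r+1, (x.1:ℕ) - (r - r')), le_refl _,
          by have := x.1.isLt; omega, by omega⟩))
  invFun := fun x =>
    match x with
    | .inl (.inl p) => (⟨p.1.1, by have := p.2; omega⟩, ⟨p.1.2, by have := p.2; omega⟩)
    | .inl (.inr p) =>
        if ha : p.1.1 ≤ r then (⟨p.1.1, by omega⟩, ⟨p.1.2, by have := p.2; omega⟩)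
        else (⟨p.1.2 + (r - r'), by have := p.2; omega⟩, ⟨r'+1, by omega⟩)
    | .inr m => (⟨(m:ℕ), by have := m.isLt; omega⟩, ⟨r'+1, by omega⟩)
  left_inv := by
    rintro ⟨i, j⟩
    by_cases hj : (j : ℕ) ≤ r'
    · by_cases hij : (i : ℕ) + (j : ℕ) ≤ r'
      · simp only [hj, hij, dif_pos]
      · have hi : (i:ℕ) ≤ r := by have := i.isLt; omega
        simp only [hj, hij, dif_pos, dif_neg, not_false_iff, hi]
    · by_cases him : (i : ℕ) < r - r'
      · simp only [hj, him, dif_pos, dif_neg, not_false_iff]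
        exact Prod.ext rfl (Fin.ext (by have := j.isLt; simp; omega))
      · simp only [hj, him, dif_neg, not_false_iff]
        have : ¬ (r + 1 ≤ r) := by omega
        simp only [this, dif_neg, not_false_iff]
        refine Prod.ext (Fin.ext ?_) (Fin.ext ?_)
        · simp; omega
        · have := j.isLt; simp; omega
  right_inv := by
    rintro ((⟨⟨a,b⟩, hb, hab⟩ | ⟨⟨a,b⟩, ha, hb, hab⟩) | m)
    · simp only [hb, hab, dif_pos]
    · by_cases ha' : a ≤ r
      · simp only [ha', dif_pos]
        have : ¬ (a + b ≤ r') := by omega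
        simp only [hb, this, dif_pos, dif_neg, not_false_iff]
      · have haa : a = r + 1 := by omega
        simp only [ha', dif_neg, not_false_iff]
        have h1 : ¬ ((r' + 1 : ℕ) ≤ r') := by omega
        have h2 : ¬ (b + (r - r') < r - r') := by omega
        simp only [h1, h2, dif_neg, not_false_iff]
        congr 1
        congr 1
        refine Subtype.ext (Prod.ext ?_ ?_) <;> simp <;> omega
    · have h1 : ¬ ((r' + 1 : ℕ) ≤ r') := by omega
      have h2 : ((m:ℕ)) < r - r' := m.isLt
      simp only [h1, h2, dif_pos, dif_neg, not_false_iff]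

lemma span_eta (m : ℕ) (hm : m ≤ r) (hrr' : r' < r) :
    hcl r r' ^ m * (xcl r r' - hcl r r') ^ (r'+1) ∈
      Submodule.span ℤ (Set.range (v r r')) := by
  by_cases him : m < r - r'
  · exact Submodule.subset_span ⟨.inr ⟨m, him⟩, rfl⟩
  · have hb : m - (r - r') ≤ r' := by omega
    set b := m - (r - r') with hbdef
    have w_mem : v r r' (.inl (.inr ⟨(r+1, b), le_refl _, hb, by omega⟩)) ∈
        Submodule.span ℤ (Set.range (v r r')) := Submodule.subset_span ⟨_, rfl⟩
    have hv : v r r' (.inl (.inr ⟨(r+1, b), le_refl _, hb, by omega⟩)) =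
        (-1 : FlipRing r r') ^ (r' - b) * (hcl r r' ^ m * (xcl r r' - hcl r r') ^ (r'+1)) := by
      show hcl r r' ^ (r+1) * _ + _ = _
      have he : r + 1 + b - r' - 1 = m := by omega
      rw [hcl_pow, he, zero_mul, zero_add]
    have key : hcl r r' ^ m * (xcl r r' - hcl r r') ^ (r'+1) =
        ((-1 : ℤ) ^ (r' - b)) • v r r' (.inl (.inr ⟨(r+1, b), le_refl _, hb, by omega⟩)) := by
      rw [hv, zsmul_eq_mul, ← mul_assoc]
      have h1 : (((-1:ℤ)^(r' - b) : ℤ) : FlipRing r r') * (-1 : FlipRing r r')^(r' - b) = 1 := by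
        push_cast
        rw [← mul_pow]; norm_num
      rw [h1, one_mul]
    rw [key]
    exact Submodule.smul_mem _ _ w_mem

lemma span_all (i j : ℕ) (hi : i ≤ r) (hj : j ≤ r' + 1) (hrr' : r' < r) :
    hcl r r' ^ i * (xcl r r' - hcl r r') ^ j ∈
      Submodule.span ℤ (Set.range (v r r')) := by
  by_cases hj' : j ≤ r'
  · by_cases hij : i + j ≤ r'
    · exact Submodule.subset_span ⟨.inl (.inl ⟨(i,j), hj', hij⟩), rfl⟩
    · have h1 := span_eta r r' (i+j-r'-1) (by omega) hrr'
      have h2 : v r r' (.inl (.inr ⟨(i,j), by omega, hj', by omega⟩)) ∈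
          Submodule.span ℤ (Set.range (v r r')) := Submodule.subset_span ⟨_, rfl⟩
      have key : hcl r r' ^ i * (xcl r r' - hcl r r') ^ j =
          v r r' (.inl (.inr ⟨(i,j), by omega, hj', by omega⟩)) -
            ((-1 : ℤ) ^ (r' - j)) •
              (hcl r r' ^ (i+j-r'-1) * (xcl r r' - hcl r r') ^ (r'+1)) := by
        show _ = (_ + _) - _
        rw [zsmul_eq_mul]
        push_cast
        ring
      rw [key]
      exact sub_mem h2 (Submodule.smul_mem _ _ h1)
  · have hj2 : j = r' + 1 := by omega
    subst hj2
    exact span_eta r r' i hi hrr'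

lemma span_top (hrr' : r' < r) : Submodule.span ℤ (Set.range (v r r')) = ⊤ := by
  rw [eq_top_iff, ← (bR r r').span_eq, Submodule.span_le]
  rintro _ ⟨⟨i, j⟩, rfl⟩
  rw [bR_apply]
  exact span_all r r' i j (by have := i.isLt; omega) (by have := j.isLt; omega) hrr'

def Tmap (hrr' : r' < r) : FlipRing r r' →ₗ[ℤ] FlipRing r r' :=
  (bR r r').constr ℤ (fun m => v r r' (eIdx r r' hrr' m))

lemma Tmap_surj (hrr' : r' < r) : Function.Surjective (Tmap r r' hrr') := by
  rw [← LinearMap.range_eq_top, eq_top_iff, ← span_top r r' hrr', Submodule.span_le]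
  rintro _ ⟨i, rfl⟩
  exact ⟨bR r r' ((eIdx r r' hrr').symm i), by
    rw [Tmap, Module.Basis.constr_basis, Equiv.apply_symm_apply]⟩

lemma Tmap_bij (hrr' : r' < r) : Function.Bijective (Tmap r r' hrr') := by
  have : Module.Finite ℤ (FlipRing r r') := Module.Finite.of_basis (bR r r')
  exact ⟨IsNoetherian.injective_of_surjective_endomorphism _ (Tmap_surj r r' hrr'),
    Tmap_surj r r' hrr'⟩

def bFinal (hrr' : r' < r) : Module.Basis (Idx r r') ℤ (FlipRing r r') :=
  ((bR r r').map (LinearEquiv.ofBijective _ (Tmap_bij r r' hrr'))).reindex (eIdx r r' hrr')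

lemma bFinal_apply (hrr' : r' < r) (i : Idx r r') : bFinal r r' hrr' i = v r r' i := by
  rw [bFinal, Module.Basis.reindex_apply, Module.Basis.map_apply]
  show Tmap r r' hrr' _ = _
  rw [Tmap, Module.Basis.constr_basis, Equiv.apply_symm_apply]

end FlipBasis
end

/-- for `r > r' ≥ 0` and `d = r − r'`, the elements
(i) `h^a·(ξ−h)^b` for `b ≤ r'`, `a+b ≤ r'`,
(ii) `h^a·(ξ−h)^b + (−1)^(r'−b)·h^(a+b−r'−1)·(ξ−h)^(r'+1)` for `a ≤ r+1`, `b ≤ r'`, `a+b ≥ r'+1`,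
(iii) `h^m·(ξ−h)^(r'+1)` for `0 ≤ m ≤ d−1`
form a `ℤ`-basis of `R = ℤ[h,ξ]/(h^(r+1), ξ·(ξ−h)^(r'+1))`. -/
theorem flipRing_split_basis (r r' : ℕ) (hrr' : r' < r) :
    ∃ b : Module.Basis
        (({p : ℕ × ℕ // p.2 ≤ r' ∧ p.1 + p.2 ≤ r'} ⊕
          {p : ℕ × ℕ // p.1 ≤ r + 1 ∧ p.2 ≤ r' ∧ r' + 1 ≤ p.1 + p.2}) ⊕
          Fin (r - r')) ℤ (FlipRing r r'),
      (∀ p : {p : ℕ × ℕ // p.2 ≤ r' ∧ p.1 + p.2 ≤ r'},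
        b (Sum.inl (Sum.inl p)) =
          hcl r r' ^ p.1.1 * (xcl r r' - hcl r r') ^ p.1.2) ∧
      (∀ p : {p : ℕ × ℕ // p.1 ≤ r + 1 ∧ p.2 ≤ r' ∧ r' + 1 ≤ p.1 + p.2},
        b (Sum.inl (Sum.inr p)) =
          hcl r r' ^ p.1.1 * (xcl r r' - hcl r r') ^ p.1.2 +
            (-1 : FlipRing r r') ^ (r' - p.1.2) *
              (hcl r r' ^ (p.1.1 + p.1.2 - r' - 1) * (xcl r r' - hcl r r') ^ (r' + 1))) ∧
      (∀ m : Fin (r - r'),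
        b (Sum.inr m) = hcl r r' ^ (m : ℕ) * (xcl r r' - hcl r r') ^ (r' + 1)) := by
  refine ⟨FlipBasis.bFinal r r' hrr', fun p => ?_, fun p => ?_, fun m => ?_⟩ <;>
    rw [FlipBasis.bFinal_apply] <;> rfl
end

section
/- Fix a nonzero complex number z and natural numbers r, r'. For a smooth function f : (0,∞)² → ℂ in the variables (q₁,q₂), define (D₁f)(q₁,q₂) = z·q₁·∂f/∂q₁ and (D₂f)(q₁,q₂) = z·q₂·∂f/∂q₂, and set Box_ℓ f = D₁^{r+1} f − q₁·(D₂−D₁)^{r'+1} f, Box_γ f = D₂((D₂−D₁)^{r'+1} f) − q₂·f, Box_{ℓ'} f = (D₂−D₁)^{r'+1} f − q₁^{−1}·D₁^{r+1} f, and Box_{γ'} f = D₂(D₁^{r+1} f) − q₁·q₂·f, where (D₂−D₁)^{k} denotes the k-fold iterate of the operator f ↦ D₂f − D₁f and all operator powers are iterates. Then f satisfies Box_ℓ f = 0 and Box_γ f = 0 if and only if f satisfies Box_{ℓ'} f = 0 and Box_{γ'} f = 0. -/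
/-- The operator `D₁ f = z·q₁·∂f/∂q₁` on functions of `(q₁,q₂) ∈ ℝ²`. -/
noncomputable def Dop1 (z : ℂ) (f : ℝ × ℝ → ℂ) : ℝ × ℝ → ℂ :=
  fun p => z * (p.1 : ℂ) * fderiv ℝ f p (1, 0)

/-- The operator `D₂ f = z·q₂·∂f/∂q₂` on functions of `(q₁,q₂) ∈ ℝ²`. -/
noncomputable def Dop2 (z : ℂ) (f : ℝ × ℝ → ℂ) : ℝ × ℝ → ℂ :=
  fun p => z * (p.2 : ℂ) * fderiv ℝ f p (0, 1)

/-- The operator `D₂ − D₁`. -/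
noncomputable def Dop21 (z : ℂ) (f : ℝ × ℝ → ℂ) : ℝ × ℝ → ℂ :=
  fun p => Dop2 z f p - Dop1 z f p

/-- The Picard–Fuchs operator `□_ℓ = D₁^(r+1) − q₁·(D₂−D₁)^(r'+1)` of `X`. -/
noncomputable def BoxL (z : ℂ) (r r' : ℕ) (f : ℝ × ℝ → ℂ) : ℝ × ℝ → ℂ :=
  fun p => (Dop1 z)^[r + 1] f p - (p.1 : ℂ) * ((Dop21 z)^[r' + 1] f p)

/-- The Picard–Fuchs operator `□_γ = D₂·(D₂−D₁)^(r'+1) − q₂` of `X`. -/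
noncomputable def BoxG (z : ℂ) (r r' : ℕ) (f : ℝ × ℝ → ℂ) : ℝ × ℝ → ℂ :=
  fun p => Dop2 z ((Dop21 z)^[r' + 1] f) p - (p.2 : ℂ) * f p

/-- The Picard–Fuchs operator `□_{ℓ'} = (D₂−D₁)^(r'+1) − q₁⁻¹·D₁^(r+1)` of `X'`, written in
the coordinates of `X`. -/
noncomputable def BoxL' (z : ℂ) (r r' : ℕ) (f : ℝ × ℝ → ℂ) : ℝ × ℝ → ℂ :=
  fun p => (Dop21 z)^[r' + 1] f p - (p.1 : ℂ)⁻¹ * ((Dop1 z)^[r + 1] f p)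

/-- The Picard–Fuchs operator `□_{γ'} = D₂·D₁^(r+1) − q₁·q₂` of `X'`, written in the
coordinates of `X`. -/
noncomputable def BoxG' (z : ℂ) (r r' : ℕ) (f : ℝ × ℝ → ℂ) : ℝ × ℝ → ℂ :=
  fun p => Dop2 z ((Dop1 z)^[r + 1] f) p - (p.1 : ℂ) * (p.2 : ℂ) * f p

lemma contDiff_fderiv_apply {f : ℝ × ℝ → ℂ} (hf : ContDiff ℝ (⊤ : ℕ∞) f) (v : ℝ × ℝ) :
    ContDiff ℝ (⊤ : ℕ∞) (fun p => fderiv ℝ f p v) :=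
  (ContinuousLinearMap.apply ℝ ℂ v).contDiff.comp (hf.fderiv_right (by simp))

lemma contDiff_coe_fst : ContDiff ℝ (⊤ : ℕ∞) (fun p : ℝ × ℝ => ((p.1 : ℝ) : ℂ)) :=
  Complex.ofRealCLM.contDiff.comp contDiff_fst

lemma contDiff_coe_snd : ContDiff ℝ (⊤ : ℕ∞) (fun p : ℝ × ℝ => ((p.2 : ℝ) : ℂ)) :=
  Complex.ofRealCLM.contDiff.comp contDiff_snd

lemma contDiff_Dop1 (z : ℂ) {f : ℝ × ℝ → ℂ} (hf : ContDiff ℝ (⊤ : ℕ∞) f) :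
    ContDiff ℝ (⊤ : ℕ∞) (Dop1 z f) :=
  (contDiff_const.mul contDiff_coe_fst).mul (contDiff_fderiv_apply hf (1, 0))

lemma contDiff_Dop2 (z : ℂ) {f : ℝ × ℝ → ℂ} (hf : ContDiff ℝ (⊤ : ℕ∞) f) :
    ContDiff ℝ (⊤ : ℕ∞) (Dop2 z f) :=
  (contDiff_const.mul contDiff_coe_snd).mul (contDiff_fderiv_apply hf (0, 1))

lemma contDiff_Dop21 (z : ℂ) {f : ℝ × ℝ → ℂ} (hf : ContDiff ℝ (⊤ : ℕ∞) f) :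
    ContDiff ℝ (⊤ : ℕ∞) (Dop21 z f) :=
  (contDiff_Dop2 z hf).sub (contDiff_Dop1 z hf)

lemma contDiff_iter1 (z : ℂ) {f : ℝ × ℝ → ℂ} (hf : ContDiff ℝ (⊤ : ℕ∞) f) (n : ℕ) :
    ContDiff ℝ (⊤ : ℕ∞) ((Dop1 z)^[n] f) := by
  induction n with
  | zero => exact hf
  | succ n ih => rw [Function.iterate_succ_apply']; exact contDiff_Dop1 z ih

lemma contDiff_iter21 (z : ℂ) {f : ℝ × ℝ → ℂ} (hf : ContDiff ℝ (⊤ : ℕ∞) f) (n : ℕ) :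
    ContDiff ℝ (⊤ : ℕ∞) ((Dop21 z)^[n] f) := by
  induction n with
  | zero => exact hf
  | succ n ih => rw [Function.iterate_succ_apply']; exact contDiff_Dop21 z ih

lemma fderiv_coe_fst_apply (p : ℝ × ℝ) :
    fderiv ℝ (fun q : ℝ × ℝ => ((q.1 : ℝ) : ℂ)) p (0, 1) = 0 := by
  have h : (fun q : ℝ × ℝ => ((q.1 : ℝ) : ℂ))
      = (Complex.ofRealCLM.comp (ContinuousLinearMap.fst ℝ ℝ ℝ)) := rfl
  rw [h, ContinuousLinearMap.fderiv]
  simp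

/-- Key identity: `□_{γ'} f = D₂(□_ℓ f) + q₁ · □_γ f`. -/
lemma boxG'_eq (z : ℂ) (r r' : ℕ) {f : ℝ × ℝ → ℂ} (hf : ContDiff ℝ (⊤ : ℕ∞) f) (p : ℝ × ℝ) :
    BoxG' z r r' f p = Dop2 z (BoxL z r r' f) p + (p.1 : ℂ) * BoxG z r r' f p := by
  have hA : ContDiff ℝ (⊤ : ℕ∞) ((Dop1 z)^[r + 1] f) := contDiff_iter1 z hf (r + 1)
  have hB : ContDiff ℝ (⊤ : ℕ∞) ((Dop21 z)^[r' + 1] f) := contDiff_iter21 z hf (r' + 1)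
  have hAd : DifferentiableAt ℝ ((Dop1 z)^[r + 1] f) p := (hA.differentiable (by simp)) p
  have hBd : DifferentiableAt ℝ ((Dop21 z)^[r' + 1] f) p := (hB.differentiable (by simp)) p
  have hcd : DifferentiableAt ℝ (fun q : ℝ × ℝ => ((q.1 : ℝ) : ℂ)) p :=
    (contDiff_coe_fst.differentiable (by simp)) p
  have hkey : fderiv ℝ (BoxL z r r' f) p (0, 1)
      = fderiv ℝ ((Dop1 z)^[r + 1] f) p (0, 1)
        - (p.1 : ℂ) * fderiv ℝ ((Dop21 z)^[r' + 1] f) p (0, 1) := by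
    have hBoxL : BoxL z r r' f
        = fun q => (Dop1 z)^[r + 1] f q - (fun q : ℝ × ℝ => ((q.1 : ℝ) : ℂ)) q
            * (Dop21 z)^[r' + 1] f q := rfl
    rw [hBoxL, fderiv_fun_sub hAd (hcd.fun_mul hBd)]
    rw [fderiv_fun_mul hcd hBd]
    simp [fderiv_coe_fst_apply]
  simp only [BoxG', BoxG, BoxL, Dop2]
  rw [hkey]
  ring

/-- Pointwise relation `□_ℓ f = −q₁ · □_{ℓ'} f` (for `q₁ ≠ 0`). -/
lemma boxL_eq (z : ℂ) (r r' : ℕ) (f : ℝ × ℝ → ℂ) (p : ℝ × ℝ) (hp : (p.1 : ℂ) ≠ 0) :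
    BoxL z r r' f p = -(p.1 : ℂ) * BoxL' z r r' f p := by
  simp only [BoxL, BoxL']
  field_simp
  ring

/-- for a smooth function `f` on `(0,∞)²` (and `z ≠ 0`), the Picard–Fuchs system
`□_ℓ f = 0`, `□_γ f = 0` of `X` holds iff the Picard–Fuchs system `□_{ℓ'} f = 0`,
`□_{γ'} f = 0` of `X'` holds. -/
theorem picardFuchs_system_equiv (z : ℂ) (hz : z ≠ 0) (r r' : ℕ)
    (f : ℝ × ℝ → ℂ) (hf : ContDiff ℝ (⊤ : ℕ∞) f) :
    (∀ p : ℝ × ℝ, 0 < p.1 → 0 < p.2 → BoxL z r r' f p = 0 ∧ BoxG z r r' f p = 0) ↔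
    (∀ p : ℝ × ℝ, 0 < p.1 → 0 < p.2 → BoxL' z r r' f p = 0 ∧ BoxG' z r r' f p = 0) := by
  have hopen : IsOpen {q : ℝ × ℝ | 0 < q.1 ∧ 0 < q.2} :=
    (isOpen_lt continuous_const continuous_fst).inter (isOpen_lt continuous_const continuous_snd)
  constructor
  · intro h p hp1 hp2
    have hp1' : (p.1 : ℂ) ≠ 0 := by exact_mod_cast hp1.ne'
    have hL := (h p hp1 hp2).1
    have hG := (h p hp1 hp2).2
    have hev : BoxL z r r' f =ᶠ[nhds p] (fun _ => (0 : ℂ)) :=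
      Filter.eventuallyEq_of_mem (hopen.mem_nhds ⟨hp1, hp2⟩) (fun q hq => (h q hq.1 hq.2).1)
    have hfd : fderiv ℝ (BoxL z r r' f) p = 0 := by
      rw [hev.fderiv_eq]; exact fderiv_const_apply 0
    constructor
    · have h2 : BoxL z r r' f p = -(p.1 : ℂ) * BoxL' z r r' f p := boxL_eq z r r' f p hp1'
      rw [hL] at h2
      have := h2.symm
      rcases mul_eq_zero.mp this with h3 | h3
      · exact absurd (neg_eq_zero.mp h3) hp1'
      · exact h3
    · rw [boxG'_eq z r r' hf p, hG]
      simp [Dop2, hfd]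
  · intro h p hp1 hp2
    have hp1' : (p.1 : ℂ) ≠ 0 := by exact_mod_cast hp1.ne'
    have hBoxL0 : ∀ q ∈ {q : ℝ × ℝ | 0 < q.1 ∧ 0 < q.2}, BoxL z r r' f q = 0 := by
      intro q hq
      have hq1' : (q.1 : ℂ) ≠ 0 := by exact_mod_cast hq.1.ne'
      rw [boxL_eq z r r' f q hq1', (h q hq.1 hq.2).1, mul_zero]
    have hev : BoxL z r r' f =ᶠ[nhds p] (fun _ => (0 : ℂ)) :=
      Filter.eventuallyEq_of_mem (hopen.mem_nhds ⟨hp1, hp2⟩) hBoxL0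
    have hfd : fderiv ℝ (BoxL z r r' f) p = 0 := by
      rw [hev.fderiv_eq]; exact fderiv_const_apply 0
    have hL : BoxL z r r' f p = 0 := hBoxL0 p ⟨hp1, hp2⟩
    refine ⟨hL, ?_⟩
    have hid := boxG'_eq z r r' hf p
    rw [(h p hp1 hp2).2] at hid
    have hD2 : Dop2 z (BoxL z r r' f) p = 0 := by simp [Dop2, hfd]
    rw [hD2, zero_add] at hid
    exact (mul_eq_zero.mp hid.symm).resolve_left hp1'
end

section
/- Let A be a commutative ℚ-algebra and let t, h₁, h₂, h₃, h₄, h₅, h₆, h₇, h₈ ∈ A satisfy the eight equations: h₂ + (1/2)h₃ + t·h₁² = 0; h₄ + h₅ + t·h₁·h₂ = 0; h₅ + t·h₁·h₃ = 0; h₆ + h₇ − (1/2)t·h₁ + t·h₁·h₄ = 0; h₇ + t·h₁ + t·h₁·h₅ = 0; (1/2)h₈ + t·h₁ − (1/2)t·h₂ + (1/4)t·h₃ + t·h₁·h₆ = 0; h₈ + t·h₂ − (1/2)t·h₃ + t·h₁·h₇ = 0; −1 + h₃ + h₄ − (1/2)h₅ + h₁·h₈ = 0. Then t·(1 + h₁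 + 6t·h₁² + 3t²·h₁³ − 2t³·h₁⁵ + 3t⁴·h₁⁶ + t⁶·h₁⁹) = 0. -/
/-!
Equations e1, e3, e2, e5, e4, e7 are triangular: they express h₂, h₅, h₄, h₇, h₆, h₈ as affine
functions of h₃. Substituted into e6 and e8 they leave a linear system in h₃ alone,
`t * (a * h₃ + p) = 0` and `q * h₃ = a` with `a = 1 - 3t²h₁³`, `p = h₁ + 3th₁² - t³h₁⁵`,
`q = 1 + 3th₁ - t³h₁⁴`, and eliminating h₃ gives `t * (a² + p * q) = 0`. The key polynomial is
exactly `a² + p * q`.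
-/

section KeyPolynomial

variable {R : Type*} [CommRing R]

def keyPolynomial (t x : R) : R :=
  1 + x + 6 * t * x ^ 2 + 3 * t ^ 2 * x ^ 3 - 2 * t ^ 3 * x ^ 5 + 3 * t ^ 4 * x ^ 6 + t ^ 6 * x ^ 9

theorem keyPolynomial_eq_sq_add_mul (t x : R) :
    keyPolynomial t x =
      (1 - 3 * t ^ 2 * x ^ 3) ^ 2
        + (x + 3 * t * x ^ 2 - t ^ 3 * x ^ 5) * (1 + 3 * t * x - t ^ 3 * x ^ 4) := by
  unfold keyPolynomial
  ring

theorem mul_keyPolynomial_eq_zero_of_reduced_system {t x y : R}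
    (h6 : t * ((1 - 3 * t ^ 2 * x ^ 3) * y + (x + 3 * t * x ^ 2 - t ^ 3 * x ^ 5)) = 0)
    (h8 : (1 + 3 * t * x - t ^ 3 * x ^ 4) * y = 1 - 3 * t ^ 2 * x ^ 3) :
    t * keyPolynomial t x = 0 := by
  rw [keyPolynomial_eq_sq_add_mul]
  linear_combination (1 + 3 * t * x - t ^ 3 * x ^ 4) * h6 - t * (1 - 3 * t ^ 2 * x ^ 3) * h8

end KeyPolynomial

section RatAlgebra

variable (A : Type*) [Semiring A] [Algebra ℚ A]

theorem two_mul_algebraMap_half : 2 * algebraMap ℚ A (1 / 2) = 1 := by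
  rw [← map_ofNat (algebraMap ℚ A) 2, ← map_mul]
  norm_num

theorem algebraMap_quarter : algebraMap ℚ A (1 / 4) = algebraMap ℚ A (1 / 2) ^ 2 := by
  rw [← map_pow]
  norm_num

end RatAlgebra

/-- in a commutative `ℚ`-algebra, the nonlinear system (e:NL) satisfied by the
block-diagonalization data `h₁,…,h₈` of the local `(2,1)` flip implies the consistency
condition `t·F(h₁) = 0`, where `F(X) = 1 + X + 6tX² + 3t²X³ − 2t³X⁵ + 3t⁴X⁶ + t⁶X⁹`. -/
theorem keyPolynomial_consistency {A : Type*} [CommRing A] [Algebra ℚ A]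
    (t h₁ h₂ h₃ h₄ h₅ h₆ h₇ h₈ : A)
    (e1 : h₂ + algebraMap ℚ A (1/2) * h₃ + t * h₁ ^ 2 = 0)
    (e2 : h₄ + h₅ + t * h₁ * h₂ = 0)
    (e3 : h₅ + t * h₁ * h₃ = 0)
    (e4 : h₆ + h₇ - algebraMap ℚ A (1/2) * (t * h₁) + t * h₁ * h₄ = 0)
    (e5 : h₇ + t * h₁ + t * h₁ * h₅ = 0)
    (e6 : algebraMap ℚ A (1/2) * h₈ + t * h₁ - algebraMap ℚ A (1/2) * (t * h₂)
            + algebraMap ℚ A (1/4) * (t * h₃) + t * h₁ * h₆ = 0)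
    (e7 : h₈ + t * h₂ - algebraMap ℚ A (1/2) * (t * h₃) + t * h₁ * h₇ = 0)
    (e8 : -1 + h₃ + h₄ - algebraMap ℚ A (1/2) * h₅ + h₁ * h₈ = 0) :
    t * (1 + h₁ + 6 * t * h₁ ^ 2 + 3 * t ^ 2 * h₁ ^ 3 - 2 * t ^ 3 * h₁ ^ 5
          + 3 * t ^ 4 * h₁ ^ 6 + t ^ 6 * h₁ ^ 9) = 0 := by
  have hc := two_mul_algebraMap_half A
  rw [algebraMap_quarter] at e6
  set c := algebraMap ℚ A (1 / 2)
  have hh₂ : h₂ = -(c * h₃) - t * h₁ ^ 2 := by linear_combination e1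
  have hh₅ : h₅ = -(t * h₁ * h₃) := by linear_combination e3
  have hh₄ : h₄ = -h₅ - t * h₁ * h₂ := by linear_combination e2
  have hh₇ : h₇ = -(t * h₁) - t * h₁ * h₅ := by linear_combination e5
  have hh₆ : h₆ = -h₇ + c * (t * h₁) - t * h₁ * h₄ := by linear_combination e4
  have hh₈ : h₈ = -(t * h₂) + c * (t * h₃) - t * h₁ * h₇ := by linear_combination e7
  subst hh₈ hh₆ hh₇ hh₄ hh₅ hh₂
  refine mul_keyPolynomial_eq_zero_of_reduced_system (y := h₃) ?_ ?_
  · linear_combination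
      e6 - (t * h₃ + 2 * t ^ 2 * h₁ ^ 2 - t ^ 3 * h₁ ^ 3 * h₃ + 2 * c * t * h₃) * hc
  · linear_combination e8 - 2 * t * h₁ * h₃ * hc
end

section
/- Let A be a commutative ring and let t, b ∈ A satisfy t·b⁹ = b − 1. Then 1 − b⁶ + 6t·b¹² − 3t²·b¹⁸ + 2t³·b³⁰ + 3t⁴·b³⁶ − t⁶·b⁵⁴ = 0; equivalently, X = −b⁶ is a root of the polynomial F(X) = 1 + X + 6tX² + 3t²X³ − 2t³X⁵ + 3t⁴X⁶ + t⁶X⁹. -/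
/-!
Each monomial `t ^ k * b ^ m` of the expression has `m ≥ 9 * k`, so the relation
`t ^ k * b ^ (9 * k) = (b - 1) ^ k` eliminates `t` and leaves
`1 - b⁶ + 6 b³ (b - 1) - 3 (b - 1)² + 2 b³ (b - 1)³ + 3 (b - 1)⁴ - (b - 1)⁶`,
which vanishes identically as a polynomial in `b`.
-/

theorem pow_mul_pow_mul_eq_of_mul_pow_eq {M : Type*} [CommMonoid M] {t b c : M} {n : ℕ}
    (h : t * b ^ n = c) (k : ℕ) : t ^ k * b ^ (n * k) = c ^ k := by
  rw [pow_mul, ← mul_pow, h]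

/-- in a commutative ring, if `t·b⁹ = b − 1`, then
`1 − b⁶ + 6t·b¹² − 3t²·b¹⁸ + 2t³·b³⁰ + 3t⁴·b³⁶ − t⁶·b⁵⁴ = 0`; i.e. `X = −b⁶` is a root of
the key polynomial `F(X) = 1 + X + 6tX² + 3t²X³ − 2t³X⁵ + 3t⁴X⁶ + t⁶X⁹`. -/
theorem keyPolynomial_root {A : Type*} [CommRing A] (t b : A) (hb : t * b ^ 9 = b - 1) :
    1 - b ^ 6 + 6 * t * b ^ 12 - 3 * t ^ 2 * b ^ 18 + 2 * t ^ 3 * b ^ 30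
      + 3 * t ^ 4 * b ^ 36 - t ^ 6 * b ^ 54 = 0 := by
  have eliminate := pow_mul_pow_mul_eq_of_mul_pow_eq hb
  linear_combination (6 * b ^ 3) * hb - 3 * eliminate 2 + (2 * b ^ 3) * eliminate 3
    + 3 * eliminate 4 - eliminate 6
end

section
/- Let a : ℕ → ℚ satisfy a(0) = 0 and a(n) = n·a(n−1) + (n−1)·(n−1)! for all n ≥ 1. Then a(n) = n!·(n − H_n) for all n ≥ 0, where H_m = ∑_{k=1}^{m} 1/k is the m-th harmonic number (H₀ = 0). -/
/-!
Dividing by `n !` turns the recursion into `b (n + 1) = b n + 1 - 1 / (n + 1)` for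
`b n = a n / n !`, which telescopes to `b n = n - H_n`.
-/

open Nat

theorem eq_factorial_mul_sub_harmonic {a : ℕ → ℚ} (h0 : a 0 = 0)
    (hrec : ∀ n : ℕ, a (n + 1) = (n + 1) * a n + n * n !) (n : ℕ) :
    a n = n ! * (n - harmonic n) := by
  induction n with
  | zero => simp [h0]
  | succ n ih =>
    rw [hrec, ih, harmonic_succ, factorial_succ]
    push_cast
    field_simp
    ring

/-- if `a : ℕ → ℚ` satisfies `a 0 = 0` and `a n = n·a (n−1) + (n−1)·(n−1)!`
for `n ≥ 1`, then `a n = n!·(n − H_n)` where `H_m = ∑_{k=1}^m 1/k` (`H₀ = 0`). -/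
theorem g4_series_closed_form (a : ℕ → ℚ) (h0 : a 0 = 0)
    (hrec : ∀ n : ℕ, 1 ≤ n →
      a n = n * a (n - 1) + ((n : ℚ) - 1) * ((n - 1).factorial : ℚ)) :
    ∀ n : ℕ, a n = (n.factorial : ℚ) * ((n : ℚ) - ∑ k ∈ Finset.Icc 1 n, (1 : ℚ) / k) := by
  have hrec_succ : ∀ n : ℕ, a (n + 1) = (n + 1) * a n + n * n ! := fun n => by
    simpa using hrec (n + 1) n.succ_pos
  intro n
  rw [eq_factorial_mul_sub_harmonic h0 hrec_succ n, harmonic_eq_sum_Icc]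
  simp only [one_div]
end

section
/- Let a : ℕ → ℚ satisfy a(0) = 0 and a(n) = (n+2)·a(n−1) + n·n! for all n ≥ 1. Then a(n) = (n+2)!·(H_{n+2} − 2) + (n+1)! for all n ≥ 0, where H_m = ∑_{k=1}^{m} 1/k is the m-th harmonic number. -/
/-!
Dividing the recursion by `(n+2)!` makes it telescope: `a n / (n+2)!` grows at step `n` by
`n / ((n+1)(n+2)) = 2/(n+2) - 1/(n+1)`, and these increments sum to `H_{n+2} - 2 + 1/(n+2)`.
Equivalently, the closed form satisfies the same first-order recursion and initial value.
-/

open Nat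

def g5ClosedForm (n : ℕ) : ℚ := (n + 2)! * (harmonic (n + 2) - 2) + (n + 1)!

theorem g5ClosedForm_zero : g5ClosedForm 0 = 0 := by
  norm_num [g5ClosedForm, harmonic_succ]

theorem g5ClosedForm_succ (n : ℕ) :
    g5ClosedForm (n + 1) = (n + 3) * g5ClosedForm n + (n + 1) * (n + 1)! := by
  simp only [g5ClosedForm, show n + 1 + 2 = n + 2 + 1 by ring, harmonic_succ, factorial_succ]
  push_cast
  field_simp
  ring

/-- if `a : ℕ → ℚ` satisfies `a 0 = 0` and `a n = (n+2)·a (n−1) + n·n!` for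
`n ≥ 1`, then `a n = (n+2)!·(H_{n+2} − 2) + (n+1)!` where `H_m = ∑_{k=1}^m 1/k`. -/
theorem g5_series_closed_form (a : ℕ → ℚ) (h0 : a 0 = 0)
    (hrec : ∀ n : ℕ, 1 ≤ n → a n = (n + 2) * a (n - 1) + n * (n.factorial : ℚ)) :
    ∀ n : ℕ, a n = ((n + 2).factorial : ℚ) * ((∑ k ∈ Finset.Icc 1 (n + 2), (1 : ℚ) / k) - 2)
      + ((n + 1).factorial : ℚ) := by
  suffices a = g5ClosedForm by
    intro n
    rw [this, g5ClosedForm, harmonic_eq_sum_Icc]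
    simp only [one_div]
  funext n
  induction n with
  | zero => rw [h0, g5ClosedForm_zero]
  | succ n ih =>
    rw [hrec (n + 1) n.succ_pos, Nat.add_sub_cancel, ih, g5ClosedForm_succ]
    push_cast
    ring
end
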